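/- Let T = [0,1] with Lebesgue measure, θ ∈ L²(Ω, P) with E[θ] = 0 and Var[θ] = 1, r < 1, and M ⊆ [0,1] a Lebesgue measurable set of measure m. Consider the targeted disclosure signal structure: 𝔛(t) is the σ-algebra generated by θ for t ∈ M, and the trivial σ-algebra for t ∉ M, with constant payoff structure R ≡ r. Define f(t) = θ/(1 − r·m) for t ∈ M and f(t) = 0 for t ∉ M. Then f is an equilibrium of this game; its Pettis integral is ∫₀¹ f(t) dt = (m/(1 − r·m))·θ; and for all s, t ∈ [0,1], Cov[f(s), f(t)] = 1_{s ∈ M}·1_{t ∈ M}/(1 − r·m)² and Cov[f(t), θ] = 1_{t ∈ M}/(1 − r·m). -/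

import Mathlib

open MeasureTheory

/-- The mean `E[x]` of a square-integrable random variable. -/
noncomputable def meanL2 {Ω : Type*} [mΩ' : MeasurableSpace Ω] (P : Measure Ω)
    (x : Lp ℝ 2 P) : ℝ := ∫ ω, x ω ∂P

/-- The covariance `Cov[x, y] = E[xy] − E[x]·E[y]`. -/
noncomputable def covL2 {Ω : Type*} [mΩ' : MeasurableSpace Ω] (P : Measure Ω)
    (x y : Lp ℝ 2 P) : ℝ := (inner ℝ x y : ℝ) - meanL2 P x * meanL2 P y

/-- Condition (Q1): the second-moment map `(s,t) ↦ E[h(s)·h(t)]` is jointly measurable with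
respect to the completed product σ-algebra. -/
def SatisfiesQ1 {Ω : Type*} [mΩ' : MeasurableSpace Ω] {P : Measure Ω}
    {T : Type*} [MeasurableSpace T] (ν : Measure T) (h : T → Lp ℝ 2 P) : Prop :=
  NullMeasurable (fun p : T × T => (inner ℝ (h p.1) (h p.2) : ℝ)) (ν.prod ν)

/-- Condition (Q2): `t ↦ ‖h t‖` is `ν`-measurable (w.r.t. the completion) and
`∫ ‖h t‖² dν < ∞`. -/
def SatisfiesQ2 {Ω : Type*} [mΩ' : MeasurableSpace Ω] {P : Measure Ω}
    {T : Type*} [MeasurableSpace T] (ν : Measure T) (h : T → Lp ℝ 2 P) : Prop :=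
  NullMeasurable (fun t => ‖h t‖) ν ∧ ∫⁻ t, ENNReal.ofReal (‖h t‖ ^ 2) ∂ν < ⊤

/-- `f` is an equilibrium of the incomplete information game with state process `θ`, payoff
structure `R`, and signal structure `𝔛`:  each `f t` is `𝔛 t`-measurable (up to `P`-null
sets), `f` is regular (satisfies (Q1) and (Q2)), and for every `t` the process
`t' ↦ R t t' • f t'` is Pettis integrable with Pettis integral `F t` satisfying the linear
best response `f t = E[F t | 𝔛 t] + E[θ t | 𝔛 t]` `P`-a.s. -/
def IsEquilibrium {Ω : Type*} [mΩ' : MeasurableSpace Ω] (P : Measure Ω)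
    {T : Type*} [MeasurableSpace T] (ν : Measure T)
    (θ : T → Lp ℝ 2 P) (R : T → T → ℝ) (𝔛 : T → MeasurableSpace Ω)
    (f : T → Lp ℝ 2 P) : Prop :=
  (∀ t, ∃ g : Ω → ℝ, Measurable[𝔛 t] g ∧ (f t : Ω → ℝ) =ᵐ[P] g) ∧
  SatisfiesQ1 ν f ∧ SatisfiesQ2 ν f ∧
  ∀ t, ∃ F : Lp ℝ 2 P,
    (∀ x : Lp ℝ 2 P, (inner ℝ x F : ℝ) = ∫ t', R t t' * (inner ℝ x (f t') : ℝ) ∂ν) ∧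
    (f t : Ω → ℝ) =ᵐ[P]
      fun ω => (P[(F : Ω → ℝ)|𝔛 t]) ω + (P[(θ t : Ω → ℝ)|𝔛 t]) ω

open Classical in
/-- targeted disclosure equilibrium.  Agents form `[0,1]` with Lebesgue
measure.  Let `θ ∈ L²(Ω, P)` with `E[θ] = 0`, `Var[θ] = 1`, `r < 1`, and `M ⊆ [0,1]`
Lebesgue measurable of measure `m`.  Under the targeted-disclosure signal structure
(`𝔛 t` generated by `θ` for `t ∈ M`, trivial otherwise) with constant payoff structure
`R ≡ r`, the profile `f t = θ/(1 − r·m)` for `t ∈ M`, `f t = 0` otherwise, is an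
equilibrium; its Pettis integral is `(m/(1 − r·m)) • θ`; and
`Cov[f s, f t] = 1_{s∈M}·1_{t∈M}/(1−r·m)²`, `Cov[f t, θ] = 1_{t∈M}/(1−r·m)`. -/
theorem targeted_disclosure_equilibrium
    {Ω : Type*} [mΩ : MeasurableSpace Ω] (P : Measure Ω) [IsProbabilityMeasure P]
    (θ : Lp ℝ 2 P) (hθmean : meanL2 P θ = 0) (hθvar : covL2 P θ θ = 1)
    (r : ℝ) (hr : r < 1)
    (M : Set ℝ) (hMmeas : MeasurableSet M) (hMsub : M ⊆ Set.Icc (0 : ℝ) 1)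
    (m : ℝ) (hm : MeasureTheory.volume M = ENNReal.ofReal m) (hm0 : 0 ≤ m)
    (ν : Measure ℝ) (hν : ν = MeasureTheory.volume.restrict (Set.Icc (0 : ℝ) 1))
    (𝔛 : ℝ → MeasurableSpace Ω)
    (h𝔛 : ∀ t, 𝔛 t =
      if t ∈ M then MeasurableSpace.comap (θ : Ω → ℝ) inferInstance
      else (⊥ : MeasurableSpace Ω))
    (f : ℝ → Lp ℝ 2 P)
    (hf : ∀ t, f t = if t ∈ M then (1 / (1 - r * m)) • θ else 0) :
    IsEquilibrium P ν (fun _ => θ) (fun _ _ => r) 𝔛 f ∧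
    ((∀ x : Lp ℝ 2 P, NullMeasurable (fun t => (inner ℝ x (f t) : ℝ)) ν) ∧
      (∀ x : Lp ℝ 2 P,
        (inner ℝ x ((m / (1 - r * m)) • θ) : ℝ) = ∫ t, (inner ℝ x (f t) : ℝ) ∂ν)) ∧
    (∀ s t : ℝ,
      covL2 P (f s) (f t) =
        (if s ∈ M then (1 : ℝ) else 0) * (if t ∈ M then (1 : ℝ) else 0) /
          (1 - r * m) ^ 2 ∧
      covL2 P (f t) θ = (if t ∈ M then (1 : ℝ) else 0) / (1 - r * m)) := by
  -- basic numeric facts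
  have hm1 : m ≤ 1 := by
    have h : MeasureTheory.volume M ≤ MeasureTheory.volume (Set.Icc (0:ℝ) 1) :=
      measure_mono hMsub
    rw [hm, Real.volume_Icc] at h
    norm_num at h
    exact h
  have hpos : 0 < 1 - r * m := by
    rcases le_or_gt r 0 with h | h
    · nlinarith
    · nlinarith
  set c : ℝ := 1 / (1 - r * m) with hc
  have hcne : (1 - r * m) ≠ 0 := ne_of_gt hpos
  have hceq : c * (1 - r * m) = 1 := by rw [hc]; field_simp
  -- θ facts
  have hθint : Integrable (θ : Ω → ℝ) P := (Lp.memLp θ).integrable (by norm_num)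
  have hθθ : (inner ℝ θ θ : ℝ) = 1 := by
    have h := hθvar
    rw [covL2, hθmean] at h
    linarith [h]
  have hθmeas : Measurable[MeasurableSpace.comap (θ : Ω → ℝ) inferInstance] (θ : Ω → ℝ) :=
    measurable_iff_comap_le.mpr le_rfl
  -- coercion of smul
  have hsm : ∀ c' : ℝ, ((c' • θ : Lp ℝ 2 P) : Ω → ℝ) =ᵐ[P] fun ω => c' * θ ω := by
    intro c'
    filter_upwards [Lp.coeFn_smul c' θ] with ω h
    simpa using h
  have hmean_smul : ∀ c' : ℝ, meanL2 P (c' • θ) = 0 := by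
    intro c'
    unfold meanL2
    rw [integral_congr_ae (hsm c'), integral_const_mul]
    rw [meanL2] at hθmean
    rw [hθmean, mul_zero]
  have hmean0 : meanL2 P (0 : Lp ℝ 2 P) = 0 := by
    unfold meanL2
    rw [integral_congr_ae (Lp.coeFn_zero ℝ 2 P)]
    simp
  have hmeanf : ∀ t, meanL2 P (f t) = 0 := by
    intro t; rw [hf t]; split_ifs
    · exact hmean_smul c
    · exact hmean0
  -- measure of M under ν
  have hνM : ν M = ENNReal.ofReal m := by
    rw [hν, Measure.restrict_apply hMmeas, Set.inter_eq_self_of_subset_left hMsub, hm]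
  have hνprob : IsProbabilityMeasure ν := by
    constructor
    rw [hν, Measure.restrict_apply MeasurableSet.univ, Set.univ_inter, Real.volume_Icc]
    norm_num
  -- integrals of indicator-type functions over ν
  have hIndInt : ∀ a : ℝ, (∫ t, (if t ∈ M then a else 0) ∂ν) = m * a := by
    intro a
    have heq : (fun t => if t ∈ M then a else 0) = M.indicator (fun _ => a) := by
      funext t; simp [Set.indicator_apply]
    rw [heq, integral_indicator hMmeas, setIntegral_const, measureReal_def, hνM, smul_eq_mul,
      ENNReal.toReal_ofReal hm0]
  -- inner products with f
  have hinner_f : ∀ (x : Lp ℝ 2 P) t, (inner ℝ x (f t) : ℝ)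
      = if t ∈ M then c * (inner ℝ x θ : ℝ) else 0 := by
    intro x t
    rw [hf t]
    split_ifs
    · rw [real_inner_smul_right]
    · exact inner_zero_right x
  refine ⟨⟨?_, ?_, ?_, ?_⟩, ⟨?_, ?_⟩, ?_⟩
  · -- measurability wrt 𝔛 t
    intro t
    rw [hf t, h𝔛 t]
    split_ifs with ht
    · rw [if_pos ht]
      exact ⟨fun ω => c * θ ω, (hθmeas.const_mul c), hsm c⟩
    · rw [if_neg ht]
      exact ⟨fun _ => 0, @measurable_const _ _ _ ⊥ _, Lp.coeFn_zero ℝ 2 P⟩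
  · -- Q1
    have heq : (fun p : ℝ × ℝ => (inner ℝ (f p.1) (f p.2) : ℝ))
        = fun p => (if p.1 ∈ M then c else 0) * (if p.2 ∈ M then c else 0) := by
      funext p
      rw [hf p.1, hf p.2]
      split_ifs <;>
        simp [real_inner_smul_left, real_inner_smul_right, hθθ, norm_smul,
          (by have h := real_inner_self_eq_norm_sq θ; rw [hθθ] at h; nlinarith [norm_nonneg θ] : ‖θ‖ = 1)] <;> ring
    rw [SatisfiesQ1, heq]
    exact ((Measurable.ite (measurable_fst hMmeas) measurable_const measurable_const).mul
      (Measurable.ite (measurable_snd hMmeas) measurable_const measurable_const)).nullMeasurable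
  · -- Q2
    constructor
    · have heq : (fun t => ‖f t‖) = fun t => if t ∈ M then ‖c • θ‖ else 0 := by
        funext t; rw [hf t]; split_ifs <;> simp
      rw [heq]
      exact (Measurable.ite hMmeas measurable_const measurable_const).nullMeasurable
    · have hb : ∀ t, ENNReal.ofReal (‖f t‖ ^ 2) ≤ ENNReal.ofReal (‖c • θ‖ ^ 2) := by
        intro t; rw [hf t]; split_ifs
        · exact le_rfl
        · simp
      calc ∫⁻ t, ENNReal.ofReal (‖f t‖ ^ 2) ∂ν
          ≤ ∫⁻ _, ENNReal.ofReal (‖c • θ‖ ^ 2) ∂ν := lintegral_mono hb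
        _ = ENNReal.ofReal (‖c • θ‖ ^ 2) := by
            rw [lintegral_const, measure_univ, mul_one]
        _ < ⊤ := ENNReal.ofReal_lt_top
  · -- best response
    intro t
    refine ⟨(r * m * c) • θ, ?_, ?_⟩
    · intro x
      have h1 : (fun t' => r * (inner ℝ x (f t') : ℝ))
          = fun t' => if t' ∈ M then r * c * (inner ℝ x θ : ℝ) else 0 := by
        funext t'
        rw [hinner_f x t']
        split_ifs
        · ring
        · ring
      rw [h1, hIndInt, real_inner_smul_right]
      ring
    · rw [h𝔛 t, hf t]
      split_ifs with ht
      · -- t ∈ M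
        have hle : MeasurableSpace.comap (θ : Ω → ℝ) inferInstance ≤ mΩ :=
          (Lp.stronglyMeasurable θ).measurable.comap_le
        have hF : P[(((r * m * c) • θ : Lp ℝ 2 P) : Ω → ℝ)|
              MeasurableSpace.comap (θ : Ω → ℝ) inferInstance]
            =ᵐ[P] fun ω => (r * m * c) * θ ω := by
          refine (condExp_congr_ae (hsm (r * m * c))).trans ?_
          rw [condExp_of_stronglyMeasurable hle
            ((hθmeas.const_mul (r * m * c)).stronglyMeasurable)
            (hθint.const_mul _)]
        have hT : P[(θ : Ω → ℝ)|MeasurableSpace.comap (θ : Ω → ℝ) inferInstance]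
            =ᵐ[P] (θ : Ω → ℝ) := by
          rw [condExp_of_stronglyMeasurable hle hθmeas.stronglyMeasurable hθint]
        filter_upwards [hsm c, hF, hT] with ω h1 h2 h3
        rw [h1, h2, h3]
        have hcr : c = r * m * c + 1 := by linear_combination hceq
        linear_combination (θ ω : ℝ) * hcr
      · -- t ∉ M
        have hEF : ∫ ω, (((r * m * c) • θ : Lp ℝ 2 P) : Ω → ℝ) ω ∂P = 0 := by
          rw [integral_congr_ae (hsm (r * m * c)), integral_const_mul]
          rw [meanL2] at hθmean
          rw [hθmean, mul_zero]
        simp only [condExp_bot]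
        filter_upwards [Lp.coeFn_zero ℝ 2 P] with ω h
        rw [h, hEF]
        rw [meanL2] at hθmean
        rw [hθmean]
        simp
  · -- null measurability of t ↦ ⟪x, f t⟫
    intro x
    have heq : (fun t => (inner ℝ x (f t) : ℝ))
        = fun t => if t ∈ M then c * (inner ℝ x θ : ℝ) else 0 := by
      funext t; exact hinner_f x t
    rw [heq]
    exact (Measurable.ite hMmeas measurable_const measurable_const).nullMeasurable
  · -- Pettis integral
    intro x
    have heq : (fun t => (inner ℝ x (f t) : ℝ))
        = fun t => if t ∈ M then c * (inner ℝ x θ : ℝ) else 0 := by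
      funext t; exact hinner_f x t
    rw [heq, hIndInt, real_inner_smul_right]
    ring
  · -- covariances
    intro s t
    constructor
    · rw [covL2, hmeanf s, hmeanf t, mul_zero, sub_zero, hf s, hf t]
      split_ifs
      · rw [real_inner_smul_left, real_inner_smul_right, hθθ, hc]
        field_simp
      · simp
      · simp
      · simp
    · rw [covL2, hmeanf t, zero_mul, sub_zero, hf t]
      split_ifs
      · rw [real_inner_smul_left, hθθ, hc]
        simp
      · simp
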